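/- Positive definiteness of the imaginary part of Weyl disk matrices (Lemma 2.8, first claim): Assume Hypotheses 2.1 and 2.2. Let z ∈ ℂ∖ℝ, c ≠ x_0, α boundary data, and M ∈ ℂ^{m×m} with M ∈ D(z, c, x_0, α), i.e. E_c(M) ≤ 0. Then σ(c, x_0, z)·Im(M) > 0 (positive definite). -/

import Mathlib

open MeasureTheory Matrix Filter Set
open scoped Matrix.Norms.L2Operator ComplexOrder

noncomputable section

abbrev DMat (m : ℕ) := Matrix (Fin m) (Fin m) ℂ
abbrev DMat2 (m : ℕ) := Matrix (Fin m ⊕ Fin m) (Fin m ⊕ Fin m) ℂ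

/-- The matrix J = [[0, -I],[I, 0]]. -/
def Jm (m : ℕ) : DMat2 m := Matrix.fromBlocks 0 (-1) 1 0

/-- Imaginary part of a square complex matrix: (M - M*)/(2i). -/
def matIm {n : Type*} (M : Matrix n n ℂ) : Matrix n n ℂ :=
  (2 * Complex.I)⁻¹ • (M - Mᴴ)

/-- Dirac-type potential: locally integrable, a.e. self-adjoint. -/
def IsDiracPotential (m : ℕ) (B : ℝ → DMat2 m) : Prop :=
  LocallyIntegrable B volume ∧ ∀ᵐ x : ℝ, (B x).IsHermitian

/-- `F` is locally absolutely continuous on `S` with a.e. derivative `F'`. -/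
def AEDerivOn (m : ℕ) (S : Set ℝ) (F F' : ℝ → DMat m) : Prop :=
  LocallyIntegrableOn F' S volume ∧
    ∀ x ∈ S, ∀ y ∈ S, F y = F x + ∫ t in x..y, F' t

/-- `V` is a locally absolutely continuous solution on `S` of the Riccati equation
`V' + z V² + V B₂₂ V + B₁₂ V + V B₂₁ + B₁₁ + z = 0`. -/
def RiccatiOn (m : ℕ) (B : ℝ → DMat2 m) (z : ℂ) (S : Set ℝ) (V : ℝ → DMat m) : Prop :=
  ∃ V' : ℝ → DMat m, AEDerivOn m S V V' ∧
    ∀ᵐ x : ℝ, x ∈ S →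
      V' x + z • (V x * V x) + V x * (B x).toBlocks₂₂ * V x
        + (B x).toBlocks₁₂ * V x + V x * (B x).toBlocks₂₁ + (B x).toBlocks₁₁
        + z • (1 : DMat m) = 0

/-- Open sector with vertex 0, symmetry axis i·ℝ₊, in the upper half-plane. -/
def sector (ε : ℝ) : Set ℂ := {z : ℂ | ε < z.arg ∧ z.arg < Real.pi - ε}

/-- Column block matrix [I; M]. -/
def colI (m : ℕ) (M : DMat m) : Matrix (Fin m ⊕ Fin m) (Fin m) ℂ := Matrix.fromRows 1 M

/-- The Weyl disk defining matrix E_c(M). -/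
def Ec (m : ℕ) (z : ℂ) (x0 c : ℝ) (Ψ : ℝ → DMat2 m) (M : DMat m) : DMat m :=
  Real.sign ((x0 - c) * z.im) •
    ((Ψ c * colI m M)ᴴ * (Complex.I • Jm m) * (Ψ c * colI m M))

/-- Matrix solutions of the Hamiltonian system J Ψ' = (zA + B) Ψ on ℝ. -/
def IsHamMatSol (m : ℕ) {κ : Type} [Fintype κ] [DecidableEq κ] (A B : ℝ → DMat2 m) (z : ℂ)
    (Ψ : ℝ → Matrix (Fin m ⊕ Fin m) κ ℂ) : Prop :=
  ∃ Ψ' : ℝ → Matrix (Fin m ⊕ Fin m) κ ℂ,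
    LocallyIntegrable Ψ' volume ∧
    (∀ a b : ℝ, Ψ b = Ψ a + ∫ t in a..b, Ψ' t) ∧
    (∀ᵐ x : ℝ, Jm m * Ψ' x = (z • A x + B x) * Ψ x)

/-- Vector solutions of the Hamiltonian system. -/
def IsHamVecSol (m : ℕ) (A B : ℝ → DMat2 m) (z : ℂ)
    (ψ : ℝ → (Fin m ⊕ Fin m) → ℂ) : Prop :=
  ∃ ψ' : ℝ → (Fin m ⊕ Fin m) → ℂ,
    LocallyIntegrable ψ' volume ∧
    (∀ a b : ℝ, ψ b = ψ a + ∫ t in a..b, ψ' t) ∧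
    (∀ᵐ x : ℝ, (Jm m) *ᵥ ψ' x = (z • A x + B x) *ᵥ ψ x)

/-- Hypothesis 2.1. -/
structure Hyp21 (m : ℕ) (A B : ℝ → DMat2 m) : Prop where
  locA : LocallyIntegrable A volume
  locB : LocallyIntegrable B volume
  posA : ∀ᵐ x : ℝ, (A x).PosSemidef
  hermB : ∀ᵐ x : ℝ, (B x).IsHermitian

/-- Atkinson's definiteness Hypothesis 2.2. -/
def Atkinson (m : ℕ) (A B : ℝ → DMat2 m) : Prop :=
  ∀ z : ℂ, ∀ ψ : ℝ → (Fin m ⊕ Fin m) → ℂ, IsHamVecSol m A B z ψ →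
    (∃ x, ψ x ≠ 0) → ∀ a b : ℝ, a < b →
      0 < (∫ x in a..b, (star (ψ x)) ⬝ᵥ ((A x) *ᵥ (ψ x))).re

/-- Boundary data conditions (2.8e). -/
def IsBdry (m : ℕ) (α : Matrix (Fin m) (Fin m ⊕ Fin m) ℂ) : Prop :=
  α * αᴴ = 1 ∧ α * Jm m * αᴴ = 0

/-- Initial value (α*  Jα*) for the normalized fundamental system. -/
def initΨ (m : ℕ) (α : Matrix (Fin m) (Fin m ⊕ Fin m) ℂ) : DMat2 m :=
  Matrix.fromCols αᴴ (Jm m * αᴴ)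

/-- The interval from x₀ toward c: [x₀, c) if c > x₀, (c, x₀] if c < x₀. -/
def towardInt (x0 c : ℝ) : Set ℝ := Set.Ico x0 c ∪ Set.Ioc c x0


/-- `U(z,x) = Ψ(z,x)·[I; M]`. -/
def Ufun (m : ℕ) (Ψ : ℝ → DMat2 m) (M : DMat m) (x : ℝ) :
    Matrix (Fin m ⊕ Fin m) (Fin m) ℂ := Ψ x * colI m M

/-- Top `m×m` component of `U`. -/
def u1fun (m : ℕ) (Ψ : ℝ → DMat2 m) (M : DMat m) (x : ℝ) : DMat m :=
  Matrix.toRows₁ (Ufun m Ψ M x)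

/-- Bottom `m×m` component of `U`. -/
def u2fun (m : ℕ) (Ψ : ℝ → DMat2 m) (M : DMat m) (x : ℝ) : DMat m :=
  Matrix.toRows₂ (Ufun m Ψ M x)

/-- Cayley-type transform `ϑ = (u₁ + iσu₂)(u₁ − iσu₂)⁻¹`. -/
def cayley (m : ℕ) (σ : ℝ) (u1 u2 : DMat m) : DMat m :=
  (u1 + ((σ : ℂ) * Complex.I) • u2) * (u1 - ((σ : ℂ) * Complex.I) • u2)⁻¹

/-- The m×m blocks of a 2m×2m matrix, indexed by `Fin 2`. -/
def blkOf (m : ℕ) (M : DMat2 m) : Fin 2 → Fin 2 → DMat m := fun a b =>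
  if a = 0 then (if b = 0 then M.toBlocks₁₁ else M.toBlocks₁₂)
  else (if b = 0 then M.toBlocks₂₁ else M.toBlocks₂₂)

/-- Full-line Weyl-Titchmarsh matrix built from the half-line ones (eq. (2.620)). -/
def weylFull (m : ℕ) (Mm Mp : DMat m) : DMat2 m :=
  Matrix.fromBlocks ((Mm - Mp)⁻¹) ((2:ℂ)⁻¹ • ((Mm - Mp)⁻¹ * (Mm + Mp)))
    ((2:ℂ)⁻¹ • ((Mm + Mp) * (Mm - Mp)⁻¹)) (Mp * (Mm - Mp)⁻¹ * Mm)

/-- Pair solutions (u₁, u₂) of the Dirac system on a set `S`. -/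
def DiracPairSol (m : ℕ) (B : ℝ → DMat2 m) (z : ℂ) (S : Set ℝ)
    (u1 u2 : ℝ → DMat m) : Prop :=
  ∃ w1 w2 : ℝ → DMat m, AEDerivOn m S u1 w1 ∧ AEDerivOn m S u2 w2 ∧
    ∀ᵐ x : ℝ, x ∈ S →
      (-(w2 x) = (z • (1 : DMat m) + (B x).toBlocks₁₁) * u1 x + (B x).toBlocks₁₂ * u2 x ∧
        w1 x = (B x).toBlocks₂₁ * u1 x + (z • (1 : DMat m) + (B x).toBlocks₂₂) * u2 x)

/-- Square-integrable solutions of the Dirac system on `[c, ∞)`. -/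
def NplusSet (m : ℕ) (B : ℝ → DMat2 m) (z : ℂ) (c : ℝ) :
    Set (Set.Ici c → (Fin m ⊕ Fin m) → ℂ) :=
  {φ | ∃ w : ℝ → (Fin m ⊕ Fin m) → ℂ,
    LocallyIntegrableOn w (Set.Ici c) volume ∧
    (∀ x y : Set.Ici c, φ y = φ x + ∫ t in (x : ℝ)..(y : ℝ), w t) ∧
    (∀ᵐ t : ℝ, ∀ ht : t ∈ Set.Ici c,
      (Jm m) *ᵥ w t = (z • (1 : DMat2 m) + B t) *ᵥ φ ⟨t, ht⟩) ∧
    IntegrableOn (fun t : ℝ =>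
      if ht : t ∈ Set.Ici c then ∑ i, ‖φ ⟨t, ht⟩ i‖ ^ 2 else 0) (Set.Ici c) volume}

/-- Square-integrable solutions of the Dirac system on `(−∞, c]`. -/
def NminusSet (m : ℕ) (B : ℝ → DMat2 m) (z : ℂ) (c : ℝ) :
    Set (Set.Iic c → (Fin m ⊕ Fin m) → ℂ) :=
  {φ | ∃ w : ℝ → (Fin m ⊕ Fin m) → ℂ,
    LocallyIntegrableOn w (Set.Iic c) volume ∧
    (∀ x y : Set.Iic c, φ y = φ x + ∫ t in (x : ℝ)..(y : ℝ), w t) ∧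
    (∀ᵐ t : ℝ, ∀ ht : t ∈ Set.Iic c,
      (Jm m) *ᵥ w t = (z • (1 : DMat2 m) + B t) *ᵥ φ ⟨t, ht⟩) ∧
    IntegrableOn (fun t : ℝ =>
      if ht : t ∈ Set.Iic c then ∑ i, ‖φ ⟨t, ht⟩ i‖ ^ 2 else 0) (Set.Iic c) volume}

/-!
Along a solution of `J Ψ' = (z A + B) Ψ` the Hermitian form `Ψᴴ (i J) Ψ` has derivative
`-2 Im z · Ψᴴ A Ψ` (Lagrange identity). Integrating it (integration by parts for primitives of
integrable functions, by Fubini over two triangles) gives Green's identity between `x₀` and `c`.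
Since `Ψ(x₀)` is `J`-unitary, the form at `x₀` sandwiched by `[I; M]` is `2 Im M`, so
`σ Im M = ½ (-E_c(M)) + |Im z| [I; M]ᴴ (∫_{x₀}^{c} Ψᴴ A Ψ) [I; M]`.
The first term is positive semidefinite on the Weyl disk and the second is positive definite by
Atkinson's definiteness condition.
-/

open scoped Interval

section BilinearIntegrationByParts

variable {E F G : Type*} [NormedAddCommGroup E] [NormedSpace ℝ E]
  [NormedAddCommGroup F] [NormedSpace ℝ F] [NormedAddCommGroup G] [NormedSpace ℝ G]
  (β : E →L[ℝ] F →L[ℝ] G)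

theorem MeasureTheory.Integrable.bilinear_prod {α γ : Type*} [MeasurableSpace α]
    [MeasurableSpace γ] {μ : Measure α} {ν : Measure γ} [SFinite ν] {f : α → E} {g : γ → F}
    (hf : Integrable f μ) (hg : Integrable g ν) :
    Integrable (fun p : α × γ => β (f p.1) (g p.2)) (μ.prod ν) :=
  ((hf.norm.mul_prod hg.norm).const_mul ‖β‖).mono'
    (β.aestronglyMeasurable_comp₂ hf.1.comp_fst hg.1.comp_snd)
    (.of_forall fun _ => (β.le_opNorm₂ _ _).trans_eq (mul_assoc _ _ _))

variable [CompleteSpace F] [CompleteSpace G] {u : ℝ → E} {v : ℝ → F} {a b x : ℝ}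

theorem setIntegral_indicator_le_bilinear (hv : IntegrableOn v (Ioc a b)) (hx : x ∈ Ioc a b) :
    ∫ y in Ioc a b, {p : ℝ × ℝ | p.2 ≤ p.1}.indicator (fun p => β (u p.1) (v p.2)) (x, y)
      = β (u x) (∫ y in Ioc a x, v y) := by
  change ∫ y in Ioc a b, (Iic x).indicator (fun y => β (u x) (v y)) y = _
  rw [setIntegral_indicator measurableSet_Iic, Ioc_inter_Iic, min_eq_right hx.2]
  exact (β (u x)).integral_comp_comm (hv.mono_set (Ioc_subset_Ioc_right hx.2))

theorem integrableOn_bilinear_primitive (hu : IntegrableOn u (Ioc a b))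
    (hv : IntegrableOn v (Ioc a b)) :
    IntegrableOn (fun x => β (u x) (∫ y in Ioc a x, v y)) (Ioc a b) :=
  ((hu.bilinear_prod β hv).indicator
    (measurableSet_le measurable_snd measurable_fst)).integral_prod_left.congr
    ((ae_restrict_mem measurableSet_Ioc).mono fun _ hx =>
      setIntegral_indicator_le_bilinear β hv hx)

variable [CompleteSpace E]

theorem setIntegral_bilinear_primitive_add (hu : IntegrableOn u (Ioc a b))
    (hv : IntegrableOn v (Ioc a b)) :
    (∫ x in Ioc a b, β (u x) (∫ y in Ioc a x, v y))
        + ∫ x in Ioc a b, β (∫ y in Ioc a x, u y) (v x)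
      = β (∫ x in Ioc a b, u x) (∫ x in Ioc a b, v x) := by
  set μ := volume.restrict (Ioc a b)
  set S := {p : ℝ × ℝ | p.2 ≤ p.1}
  have hS : MeasurableSet S := measurableSet_le measurable_snd measurable_fst
  have hF := hu.bilinear_prod β hv
  have hF' := hv.bilinear_prod β.flip hu
  have h₁ : ∫ x in Ioc a b, β (u x) (∫ y in Ioc a x, v y)
      = ∫ p, S.indicator (fun p => β (u p.1) (v p.2)) p ∂μ.prod μ := by
    rw [integral_prod _ (hF.indicator hS)]
    exact setIntegral_congr_fun measurableSet_Ioc fun x hx =>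
      (setIntegral_indicator_le_bilinear β hv hx).symm
  have h₂ : ∫ x in Ioc a b, β (∫ y in Ioc a x, u y) (v x)
      = ∫ p, S.indicator (fun p => β.flip (v p.1) (u p.2)) p.swap ∂μ.prod μ := by
    rw [integral_prod_swap, integral_prod _ (hF'.indicator hS)]
    exact setIntegral_congr_fun measurableSet_Ioc fun x hx =>
      (setIntegral_indicator_le_bilinear β.flip hu hx).symm
  -- the two triangles overlap only on the diagonal, which is null
  have hdiag : ∀ᵐ p ∂μ.prod μ, p.2 ≠ p.1 :=
    (Measure.ae_prod_iff_ae_ae (p := fun p : ℝ × ℝ => p.2 ≠ p.1)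
      (measurableSet_eq_fun measurable_snd measurable_fst).compl).2
      (.of_forall fun x => Measure.ae_ne μ x)
  have hsum : ∀ᵐ p ∂μ.prod μ, S.indicator (fun p => β (u p.1) (v p.2)) p
      + S.indicator (fun p => β.flip (v p.1) (u p.2)) p.swap = β (u p.1) (v p.2) :=
    hdiag.mono fun p hp => by
      rcases lt_or_gt_of_ne hp with h | h <;> simp [S, indicator, h.le, h.not_ge]
  have hG : Integrable (fun p : ℝ × ℝ => S.indicator (fun p => β.flip (v p.1) (u p.2)) p.swap)
      (μ.prod μ) := (hF'.indicator hS).swap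
  rw [h₁, h₂, ← integral_add (hF.indicator hS) hG, integral_congr_ae hsum,
    integral_prod _ hF]
  simp_rw [(β _).integral_comp_comm hv]
  exact (β.flip _).integral_comp_comm hu

theorem bilinear_sub_bilinear_eq_setIntegral {u' : ℝ → E} {v' : ℝ → F}
    (hu' : IntegrableOn u' (Ioc a b)) (hv' : IntegrableOn v' (Ioc a b))
    (hu : ∀ x ∈ Icc a b, u x = u a + ∫ y in Ioc a x, u' y)
    (hv : ∀ x ∈ Icc a b, v x = v a + ∫ y in Ioc a x, v' y) (hab : a ≤ b) :
    β (u b) (v b) - β (u a) (v a) = ∫ x in Ioc a b, (β (u' x) (v x) + β (u x) (v' x)) := by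
  have hsplit : EqOn (fun x => β (u' x) (v x) + β (u x) (v' x))
      (fun x => (β.flip (v a) (u' x) + β (u a) (v' x))
        + (β (u' x) (∫ y in Ioc a x, v' y) + β.flip (v' x) (∫ y in Ioc a x, u' y)))
      (Ioc a b) := fun x hx => by
    simp only [hu x (Ioc_subset_Icc_self hx), hv x (Ioc_subset_Icc_self hx), map_add,
      _root_.add_apply, ContinuousLinearMap.flip_apply]
    abel
  rw [setIntegral_congr_fun measurableSet_Ioc hsplit,
    integral_add (((β.flip _).integrable_comp hu').fun_add ((β _).integrable_comp hv'))
      ((integrableOn_bilinear_primitive β hu' hv').fun_add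
        (integrableOn_bilinear_primitive β.flip hv' hu')),
    integral_add ((β.flip _).integrable_comp hu') ((β _).integrable_comp hv'),
    integral_add (integrableOn_bilinear_primitive β hu' hv')
        (integrableOn_bilinear_primitive β.flip hv' hu'),
    (β.flip _).integral_comp_comm hu', (β _).integral_comp_comm hv']
  simp only [ContinuousLinearMap.flip_apply]
  rw [setIntegral_bilinear_primitive_add β hu' hv', hu b ⟨hab, le_rfl⟩, hv b ⟨hab, le_rfl⟩]
  simp only [map_add, _root_.add_apply]
  abel

end BilinearIntegrationByParts

theorem Real.sign_mul_mul_eq_abs_mul_sign (x r : ℝ) :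
    Real.sign (x * r) * r = |r| * Real.sign x := by
  rcases lt_trichotomy x 0 with hx | rfl | hx <;> rcases lt_trichotomy r 0 with hr | rfl | hr <;>
    simp [Real.sign_of_neg, Real.sign_of_pos, mul_pos_of_neg_of_neg, mul_neg_of_neg_of_pos,
      mul_neg_of_pos_of_neg, abs_of_neg, abs_of_pos, *]

theorem intervalIntegral.sign_sub_smul_integral {E : Type*} [NormedAddCommGroup E]
    [NormedSpace ℝ E] (f : ℝ → E) (a b : ℝ) :
    Real.sign (b - a) • ∫ x in a..b, f x = ∫ x in Ι a b, f x := by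
  rcases lt_trichotomy a b with h | rfl | h
  · rw [Real.sign_of_pos (sub_pos.2 h), one_smul, integral_of_le h.le, uIoc_of_le h.le]
  · simp
  · rw [Real.sign_of_neg (sub_neg.2 h), neg_one_smul, integral_of_ge h.le, uIoc_of_ge h.le,
      neg_neg]

section Hamiltonian

variable {m : ℕ}

theorem Jm_conjTranspose : (Jm m)ᴴ = -Jm m := by
  simp [Jm, fromBlocks_conjTranspose, fromBlocks_neg]

theorem Jm_mul_Jm : Jm m * Jm m = -1 := by
  simp [Jm, fromBlocks_multiply, ← fromBlocks_one, fromBlocks_neg]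

theorem conjTranspose_colI_mul_smul_Jm_mul_colI (M : DMat m) :
    (colI m M)ᴴ * (Complex.I • Jm m) * colI m M = (2 : ℝ) • matIm M := by
  have hJ : (colI m M)ᴴ * Jm m * colI m M = Mᴴ - M := by
    simp [colI, Jm, conjTranspose_fromRows_eq_fromCols_conjTranspose, Matrix.mul_assoc,
      fromBlocks_mul_fromRows, fromCols_mul_fromRows, sub_eq_neg_add]
  rw [Matrix.mul_smul, Matrix.smul_mul, hJ, matIm]
  ext i j
  simp only [Matrix.smul_apply, Matrix.sub_apply, Complex.real_smul, smul_eq_mul]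
  field_simp
  simp only [Complex.I_sq, Complex.ofReal_ofNat]
  ring

theorem mulVec_injective_colI (M : DMat m) : Function.Injective (colI m M).mulVec :=
  fun v w h => funext fun i => by simpa [colI, fromRows_mulVec] using congrFun h (Sum.inl i)

theorem IsBdry.conjTranspose_initΨ_mul_Jm_mul {α : Matrix (Fin m) (Fin m ⊕ Fin m) ℂ}
    (hα : IsBdry m α) : (initΨ m α)ᴴ * Jm m * initΨ m α = Jm m := by
  obtain ⟨h1, h2⟩ := hα
  have h3 : α * (Jm m * αᴴ) = 0 := by rw [← Matrix.mul_assoc, h2]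
  have h4 : Jm m * (Jm m * αᴴ) = -αᴴ := by
    rw [← Matrix.mul_assoc, Jm_mul_Jm, Matrix.neg_mul, Matrix.one_mul]
  simp [initΨ, conjTranspose_fromCols_eq_fromRows_conjTranspose, Matrix.mul_assoc,
    Jm_conjTranspose, h1, h3, h4]
  rfl

theorem IsBdry.isUnit_initΨ {α : Matrix (Fin m) (Fin m ⊕ Fin m) ℂ} (hα : IsBdry m α) :
    IsUnit (initΨ m α) := by
  have hJ : IsUnit (Jm m) :=
    IsUnit.of_mul_eq_one (-Jm m) (by rw [Matrix.mul_neg, Jm_mul_Jm, neg_neg])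
  exact isUnit_of_mul_isUnit_right (hα.conjTranspose_initΨ_mul_Jm_mul ▸ hJ)

theorem lagrange_identity {z : ℂ} {A B X X' : DMat2 m} (hA : A.IsHermitian) (hB : B.IsHermitian)
    (h : Jm m * X' = (z • A + B) * X) :
    X'ᴴ * (Complex.I • Jm m) * X + Xᴴ * (Complex.I • Jm m) * X' = (-2 * z.im) • (Xᴴ * A * X) := by
  have h' : X'ᴴ * Jm m = -(Xᴴ * (star z • A + B)) := by
    have := congrArg conjTranspose h
    rw [conjTranspose_mul, conjTranspose_mul, Jm_conjTranspose, conjTranspose_add,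
      conjTranspose_smul, hA.eq, hB.eq, Matrix.mul_neg] at this
    rw [← this, neg_neg]
  calc X'ᴴ * (Complex.I • Jm m) * X + Xᴴ * (Complex.I • Jm m) * X'
      = Complex.I • (X'ᴴ * Jm m * X + Xᴴ * (Jm m * X')) := by
        simp only [Matrix.mul_smul, Matrix.smul_mul, Matrix.mul_assoc, smul_add]
    _ = (Complex.I * (z - star z)) • (Xᴴ * A * X) := by
        rw [h', h, ← smul_smul, sub_smul]
        simp only [Matrix.add_mul, Matrix.mul_add, Matrix.neg_mul, Matrix.mul_smul,
          Matrix.smul_mul, Matrix.mul_assoc]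
        module
    _ = (-2 * z.im) • (Xᴴ * A * X) := by
        rw [Complex.star_def, Complex.sub_conj, ← Complex.coe_smul]
        congr 1
        push_cast
        ring_nf
        simp [Complex.I_sq]

end Hamiltonian

namespace IsHamMatSol

variable {m : ℕ} {A B : ℝ → DMat2 m} {z : ℂ}

theorem continuous {κ : Type} [Fintype κ] [DecidableEq κ]
    {Ψ : ℝ → Matrix (Fin m ⊕ Fin m) κ ℂ} (hΨ : IsHamMatSol m A B z Ψ) : Continuous Ψ := by
  obtain ⟨Ψ', hΨ', hrep, -⟩ := hΨ
  rw [funext (hrep 0)]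
  exact continuous_const.add (intervalIntegral.continuous_primitive
    (fun _ _ => (hΨ'.integrableOn_isCompact isCompact_uIcc).intervalIntegrable) 0)

theorem mulVec {κ : Type} [Fintype κ] [DecidableEq κ]
    {Ψ : ℝ → Matrix (Fin m ⊕ Fin m) κ ℂ} (hΨ : IsHamMatSol m A B z Ψ) (w : κ → ℂ) :
    IsHamVecSol m A B z fun x => Ψ x *ᵥ w := by
  obtain ⟨Ψ', hΨ', hrep, hode⟩ := hΨ
  let L : Matrix (Fin m ⊕ Fin m) κ ℂ →L[ℂ] (Fin m ⊕ Fin m → ℂ) :=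
    LinearMap.toContinuousLinearMap ((mulVecBilin ℂ ℂ).flip w)
  refine ⟨fun x => Ψ' x *ᵥ w, fun x => L.integrableAtFilter_comp (hΨ' x), fun a b => ?_, ?_⟩
  · dsimp only
    rw [hrep a b, add_mulVec]
    exact congrArg _ (L.intervalIntegral_comp_comm
      (hΨ'.integrableOn_isCompact isCompact_uIcc).intervalIntegrable).symm
  · filter_upwards [hode] with x hx
    rw [mulVec_mulVec, hx, ← mulVec_mulVec]

theorem green_identity (h21 : Hyp21 m A B) {Ψ : ℝ → DMat2 m} (hΨ : IsHamMatSol m A B z Ψ)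
    (a b : ℝ) :
    (Ψ b)ᴴ * (Complex.I • Jm m) * Ψ b - (Ψ a)ᴴ * (Complex.I • Jm m) * Ψ a
      = (-2 * z.im) • ∫ x in a..b, (Ψ x)ᴴ * A x * Ψ x := by
  wlog hab : a ≤ b generalizing a b
  · rw [intervalIntegral.integral_symm, smul_neg, ← this b a (le_of_not_ge hab), neg_sub]
  obtain ⟨Ψ', hΨ', hrep, hode⟩ := hΨ
  let β : DMat2 m →L[ℝ] DMat2 m →L[ℝ] DMat2 m :=
    (ContinuousLinearMap.mul ℝ (DMat2 m)).bilinearComp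
      (starL' ℝ : DMat2 m ≃L[ℝ] DMat2 m).toContinuousLinearMap
      (ContinuousLinearMap.mul ℝ (DMat2 m) (Complex.I • Jm m))
  have hβ : ∀ X Y, β X Y = Xᴴ * (Complex.I • Jm m) * Y := fun X Y => by
    simp [β, Matrix.mul_assoc, star_eq_conjTranspose]
  have hΨ'ab : IntegrableOn Ψ' (Ioc a b) :=
    (hΨ'.integrableOn_isCompact isCompact_Icc).mono_set Ioc_subset_Icc_self
  have hrep' : ∀ x ∈ Icc a b, Ψ x = Ψ a + ∫ y in Ioc a x, Ψ' y := fun x hx => by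
    rw [hrep a x, intervalIntegral.integral_of_le hx.1]
  have hparts := bilinear_sub_bilinear_eq_setIntegral β hΨ'ab hΨ'ab hrep' hrep' hab
  simp only [hβ] at hparts
  rw [hparts, intervalIntegral.integral_of_le hab, ← integral_smul]
  refine setIntegral_congr_ae measurableSet_Ioc ?_
  filter_upwards [hode, h21.posA, h21.hermB] with x hx hA hB _
    using lagrange_identity hA.isHermitian hB hx

theorem posDef_setIntegral_uIoc (h21 : Hyp21 m A B) (h22 : Atkinson m A B) {Ψ : ℝ → DMat2 m}
    (hΨ : IsHamMatSol m A B z Ψ) {x₀ : ℝ} (hx₀ : IsUnit (Ψ x₀)) {a b : ℝ} (hab : a ≠ b) :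
    (∫ x in Ι a b, (Ψ x)ᴴ * A x * Ψ x).PosDef := by
  have hint : IntegrableOn (fun x => (Ψ x)ᴴ * A x * Ψ x) (Ι a b) := by
    have hc := hΨ.continuous.continuousOn (s := uIcc a b)
    exact (((h21.locA.integrableOn_isCompact isCompact_uIcc).continuousOn_mul
      (continuous_star.comp_continuousOn hc) isCompact_uIcc).mul_continuousOn hc
      isCompact_uIcc).mono_set uIoc_subset_uIcc
  have herm : (∫ x in Ι a b, (Ψ x)ᴴ * A x * Ψ x).IsHermitian := by
    refine (((starL' ℝ : DMat2 m ≃L[ℝ] DMat2 m) : DMat2 m →L[ℝ] DMat2 m).integral_comp_comm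
      hint).symm.trans (integral_congr_ae ((ae_restrict_of_ae h21.posA).mono fun x hA => ?_))
    simp [star_eq_conjTranspose, conjTranspose_mul, hA.isHermitian.eq, Matrix.mul_assoc]
  refine .of_dotProduct_mulVec_pos herm fun w hw => ?_
  let q : DMat2 m →L[ℂ] ℂ := LinearMap.toContinuousLinearMap
    ((dotProductBilin ℂ ℂ (star w)) ∘ₗ (mulVecBilin ℂ ℂ).flip w)
  have hq : star w ⬝ᵥ ((∫ x in Ι a b, (Ψ x)ᴴ * A x * Ψ x) *ᵥ w)
      = ∫ x in min a b..max a b, star (Ψ x *ᵥ w) ⬝ᵥ (A x *ᵥ (Ψ x *ᵥ w)) := by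
    rw [intervalIntegral.integral_of_le min_le_max]
    refine (q.integral_comp_comm hint).symm.trans (integral_congr_ae (.of_forall fun x => ?_))
    simp [q, Matrix.mul_assoc, dotProduct_mulVec, star_mulVec]
  have hψ : ∃ x, Ψ x *ᵥ w ≠ 0 := ⟨x₀, fun h =>
    hw (mulVec_injective_iff_isUnit.2 hx₀ (h.trans (mulVec_zero _).symm))⟩
  have hre := h22 z _ (hΨ.mulVec w) hψ _ _ (min_lt_max.2 hab)
  exact Complex.lt_def.2 ⟨hq ▸ hre, (herm.im_star_dotProduct_mulVec_self w).symm⟩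

theorem sign_smul_matIm_eq {x0 : ℝ} {α : Matrix (Fin m) (Fin m ⊕ Fin m) ℂ}
    {Ψ : ℝ → DMat2 m} (h21 : Hyp21 m A B)
    (hα : IsBdry m α) (hΨ : IsHamMatSol m A B z Ψ) (hΨ0 : Ψ x0 = initΨ m α) (c : ℝ)
    (M : DMat m) :
    Real.sign ((c - x0) * z.im) • matIm M = (2⁻¹ : ℝ) • -(Ec m z x0 c Ψ M)
      + |z.im| • ((colI m M)ᴴ * (∫ x in Ι x0 c, (Ψ x)ᴴ * A x * Ψ x) * colI m M) := by
  set s := Real.sign ((c - x0) * z.im)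
  set K := Complex.I • Jm m
  set L := colI m M
  set I₀ := ∫ x in x0..c, (Ψ x)ᴴ * A x * Ψ x
  have hx0 : Lᴴ * ((Ψ x0)ᴴ * K * Ψ x0) * L = (2 : ℝ) • matIm M := by
    rw [hΨ0, Matrix.mul_smul, Matrix.smul_mul, hα.conjTranspose_initΨ_mul_Jm_mul,
      ← conjTranspose_colI_mul_smul_Jm_mul_colI]
  have hgreen : Lᴴ * ((Ψ c)ᴴ * K * Ψ c) * L - Lᴴ * ((Ψ x0)ᴴ * K * Ψ x0) * L
      = (-2 * z.im) • (Lᴴ * I₀ * L) := by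
    rw [← Matrix.sub_mul, ← Matrix.mul_sub, hΨ.green_identity h21, Matrix.mul_smul,
      Matrix.smul_mul]
  have hEc : -(Ec m z x0 c Ψ M) = s • (Lᴴ * ((Ψ c)ᴴ * K * Ψ c) * L) := by
    rw [Ec, show (x0 - c) * z.im = -((c - x0) * z.im) by ring, Real.sign_neg, neg_smul, neg_neg,
      conjTranspose_mul]
    simp only [s, L, K, Matrix.mul_assoc]
  have hsign : (s * z.im) • (Lᴴ * I₀ * L)
      = |z.im| • (Lᴴ * (∫ x in Ι x0 c, (Ψ x)ᴴ * A x * Ψ x) * L) := by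
    rw [Real.sign_mul_mul_eq_abs_mul_sign, mul_smul, ← intervalIntegral.sign_sub_smul_integral,
      Matrix.mul_smul, Matrix.smul_mul]
  linear_combination (norm := module) (-2⁻¹ : ℝ) • hEc + hsign - (s / 2) • hgreen
    - (s / 2) • hx0

end IsHamMatSol

theorem statement9_general (m : ℕ) (A B : ℝ → DMat2 m)
    (h21 : Hyp21 m A B) (h22 : Atkinson m A B)
    (z : ℂ) (hz : z.im ≠ 0) (x0 c : ℝ) (hc : c ≠ x0)
    (α : Matrix (Fin m) (Fin m ⊕ Fin m) ℂ) (hα : IsBdry m α)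
    (M : DMat m) (Ψ : ℝ → DMat2 m)
    (hΨ : IsHamMatSol m A B z Ψ) (hΨ0 : Ψ x0 = initΨ m α)
    (hM : (-(Ec m z x0 c Ψ M)).PosSemidef) :
    (Real.sign ((c - x0) * z.im) • matIm M).PosDef := by
  have hT := (hΨ.posDef_setIntegral_uIoc h21 h22 (hΨ0 ▸ hα.isUnit_initΨ) hc.symm)
    |>.conjTranspose_mul_mul_same (mulVec_injective_colI M)
  rw [hΨ.sign_smul_matIm_eq h21 hα hΨ0 c M]
  exact PosDef.posSemidef_add (hM.smul (by norm_num)) (hT.smul (abs_pos.2 hz))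

theorem statement9 (m : ℕ) (hm : 1 ≤ m) (A B : ℝ → DMat2 m)
    (h21 : Hyp21 m A B) (h22 : Atkinson m A B)
    (z : ℂ) (hz : z.im ≠ 0) (x0 c : ℝ) (hc : c ≠ x0)
    (α : Matrix (Fin m) (Fin m ⊕ Fin m) ℂ) (hα : IsBdry m α)
    (M : DMat m) (Ψ : ℝ → DMat2 m)
    (hΨ : IsHamMatSol m A B z Ψ) (hΨ0 : Ψ x0 = initΨ m α)
    (hM : (-(Ec m z x0 c Ψ M)).PosSemidef) :
    (Real.sign ((c - x0) * z.im) • matIm M).PosDef :=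
  statement9_general m A B h21 h22 z hz x0 c hc α hα M Ψ hΨ hΨ0 hM
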